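/- arXiv:2601.10557 — 2 statements merged into one kernel-verified Lean document; each statement's English description precedes it below -/
import Mathlib

section
/- If H satisfies SH = H*S and SH is Hermitian positive definite, then every eigenvalue λ of H satisfies |λ| ≤ ρ(A), the spectral radius of the upper-left m×m block A of H. -/
open Matrix
open scoped ComplexOrder

noncomputable section

/-- The signature matrix `S = diag(I_m, -I_m)`. -/
def Smat (m : ℕ) : Matrix (Fin m ⊕ Fin m) (Fin m ⊕ Fin m) ℂ :=
  fromBlocks 1 0 0 (-1)

/-- Spectral radius of a complex matrix. -/
def specRad {k : Type*} [Fintype k] [DecidableEq k] (M : Matrix k k ℂ) : ℝ :=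
  sSup ((fun μ : ℂ => ‖μ‖) '' spectrum ℂ M)

/-!
Since `SH` is positive definite and `SH v = λ S v`, the number `v* SH v = λ · v* S v` is positive
while `v* S v` is real, so `λ` is real. Write `v = (x, y)`. The off-diagonal blocks contribute
`x* B y - conj (x* B y)` to `v* H v`, which is purely imaginary, so
`λ (‖x‖² + ‖y‖²) = Re (v* H v) = x* A x - ȳ* A ȳ`. The block `A` of `SH` is positive semidefinite
and `A ≤ ρ(A)`, so both quadratic forms lie in `[0, ρ(A) ‖·‖²]`, whence `|λ| ≤ ρ(A)`.
-/

theorem norm_le_specRad {k : Type*} [Fintype k] [DecidableEq k] {M : Matrix k k ℂ} {μ : ℂ}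
    (hμ : μ ∈ spectrum ℂ M) : ‖μ‖ ≤ specRad M :=
  le_csSup ((finite_spectrum M).image _).bddAbove ⟨μ, hμ, rfl⟩

open scoped MatrixOrder in
theorem Matrix.IsHermitian.re_dotProduct_mulVec_le_specRad_mul {k : Type*} [Fintype k]
    [DecidableEq k] {A : Matrix k k ℂ} (hA : A.IsHermitian) (x : k → ℂ) :
    (star x ⬝ᵥ A *ᵥ x).re ≤ specRad A * (star x ⬝ᵥ x).re := by
  have hle : A ≤ algebraMap ℝ _ (specRad A) :=
    (le_algebraMap_iff_spectrum_le hA.isSelfAdjoint).2 fun r hr =>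
      (le_abs_self r).trans (by simpa using norm_le_specRad (spectrum.algebraMap_mem ℂ hr))
  have := (Complex.le_def.1 ((le_iff.1 hle).dotProduct_mulVec_nonneg x)).1
  simpa [sub_mulVec, Algebra.algebraMap_eq_smul_one, smul_mulVec, Complex.mul_re] using this

theorem Matrix.IsHermitian.re_dotProduct_fromBlocks_neg_mulVec {m n : Type*} [Fintype m]
    [Fintype n] {A : Matrix m m ℂ} {B : Matrix m n ℂ} {C : Matrix n m ℂ} {D : Matrix n n ℂ}
    (h : (Matrix.fromBlocks A B C D).IsHermitian) (x : m → ℂ) (y : n → ℂ) :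
    (star (Sum.elim x y) ⬝ᵥ Matrix.fromBlocks A B (-C) (-D) *ᵥ Sum.elim x y).re
      = (star x ⬝ᵥ A *ᵥ x).re - (star y ⬝ᵥ D *ᵥ y).re := by
  obtain ⟨-, hBC, -, -⟩ := isHermitian_fromBlocks_iff.1 h
  have hcross : star y ⬝ᵥ C *ᵥ x = star (star x ⬝ᵥ B *ᵥ y) := by
    rw [← hBC, star_dotProduct, star_mulVec, ← dotProduct_mulVec,
      conjTranspose_conjTranspose]
  rw [fromBlocks_mulVec, Function.star_sumElim, Sum.elim_comp_inl, Sum.elim_comp_inr,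
    sumElim_dotProduct_sumElim, neg_mulVec, neg_mulVec,
    dotProduct_add, dotProduct_add, dotProduct_neg, dotProduct_neg, hcross]
  simp only [Complex.add_re, Complex.neg_re, Complex.star_def, Complex.conj_re]
  ring

theorem Matrix.star_dotProduct_map_conj_mulVec {n : Type*} [Fintype n] (A : Matrix n n ℂ)
    (y : n → ℂ) :
    star y ⬝ᵥ A.map (starRingEnd ℂ) *ᵥ y = starRingEnd ℂ (star (star y) ⬝ᵥ A *ᵥ star y) := by
  simp [dotProduct, mulVec, map_sum]

theorem Matrix.PosDef.im_eq_zero_of_mulVec_eq_smul_mulVec {n : Type*} [Fintype n]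
    {M S : Matrix n n ℂ} (hM : M.PosDef) (hS : S.IsHermitian) {v : n → ℂ} (hv : v ≠ 0) {lam : ℂ}
    (h : M *ᵥ v = lam • S *ᵥ v) : lam.im = 0 := by
  have hpos := hM.dotProduct_mulVec_pos hv
  rw [h, dotProduct_smul, smul_eq_mul] at hpos
  have hs : (star v ⬝ᵥ S *ᵥ v).im = 0 := hS.im_star_dotProduct_mulVec_self v
  obtain ⟨hre, him⟩ := Complex.lt_def.1 hpos
  simp only [Complex.zero_re, Complex.zero_im, Complex.mul_re, Complex.mul_im, hs, mul_zero,
    sub_zero, zero_add] at hre him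
  exact (mul_eq_zero.1 him.symm).resolve_right fun h0 => by simp [h0] at hre

theorem abs_le_of_mul_add_eq_sub {l t a b p q : ℝ} (hab : 0 < a + b) (h : l * (a + b) = p - q)
    (hp : 0 ≤ p) (hpa : p ≤ t * a) (hq : 0 ≤ q) (hqb : q ≤ t * b) : |l| ≤ t := by
  refine le_of_mul_le_mul_right ?_ hab
  rw [← abs_of_pos hab, ← abs_mul, h, abs_of_pos hab]
  calc |p - q| ≤ p + q := abs_sub_le_of_nonneg_of_le hp (by linarith) hq (by linarith)
    _ ≤ t * (a + b) := by linarith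

theorem Smat_mul_fromBlocks {m : ℕ} (A B C D : Matrix (Fin m) (Fin m) ℂ) :
    Smat m * fromBlocks A B C D = fromBlocks A B (-C) (-D) := by
  simp [Smat, fromBlocks_multiply]

theorem isHermitian_Smat (m : ℕ) : (Smat m).IsHermitian := by
  simp [Smat, isHermitian_fromBlocks_iff]

theorem stmt5_general (m : ℕ)
    (A B : Matrix (Fin m) (Fin m) ℂ)
    (H : Matrix (Fin m ⊕ Fin m) (Fin m ⊕ Fin m) ℂ)
    (hH : H = fromBlocks A B (-(B.map (starRingEnd ℂ))) (-(A.map (starRingEnd ℂ))))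
    (hpd : (Smat m * H).PosDef)
    (v : (Fin m ⊕ Fin m) → ℂ) (hv : v ≠ 0) (lam : ℂ)
    (hright : H *ᵥ v = lam • v) :
    ‖lam‖ ≤ specRad A := by
  have hSH : Smat m * H = fromBlocks A B (B.map (starRingEnd ℂ)) (A.map (starRingEnd ℂ)) := by
    rw [hH, Smat_mul_fromBlocks, neg_neg, neg_neg]
  have hA : A.PosSemidef := by
    have := hpd.posSemidef.submatrix Sum.inl
    rwa [hSH] at this
  have him : lam.im = 0 :=
    hpd.im_eq_zero_of_mulVec_eq_smul_mulVec (isHermitian_Smat m) hv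
      (by rw [← mulVec_mulVec, hright, mulVec_smul])
  set x := v ∘ Sum.inl
  set y := v ∘ Sum.inr
  have hv' : v = Sum.elim x y := (Sum.elim_comp_inl_inr v).symm
  have hquad : lam.re * ((star x ⬝ᵥ x).re + (star y ⬝ᵥ y).re)
      = (star x ⬝ᵥ A *ᵥ x).re - (star (star y) ⬝ᵥ A *ᵥ star y).re := by
    have := (hSH ▸ hpd.isHermitian).re_dotProduct_fromBlocks_neg_mulVec x y
    rw [← hH, ← hv', hright, dotProduct_smul, hv', Function.star_sumElim,
      sumElim_dotProduct_sumElim, star_dotProduct_map_conj_mulVec, Complex.conj_re] at this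
    simpa [Complex.mul_re, him] using this
  have hnorm : 0 < (star x ⬝ᵥ x).re + (star y ⬝ᵥ y).re := by
    have := (Complex.lt_def.1 (dotProduct_star_self_pos_iff.2 hv)).1
    rwa [hv', Function.star_sumElim, sumElim_dotProduct_sumElim, Complex.add_re] at this
  rw [← Complex.abs_re_eq_norm.2 him]
  have hy : star (star y) ⬝ᵥ star y = star y ⬝ᵥ y := by rw [star_star, dotProduct_comm]
  exact abs_le_of_mul_add_eq_sub hnorm hquad (hA.re_dotProduct_nonneg x)
    (hA.isHermitian.re_dotProduct_mulVec_le_specRad_mul x) (hA.re_dotProduct_nonneg (star y))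
    (hy ▸ hA.isHermitian.re_dotProduct_mulVec_le_specRad_mul (star y))

/-- If `SH = Hᴴ S` and `SH` is Hermitian positive definite, then every
eigenvalue `λ` of `H` satisfies `|λ| ≤ ρ(A)`, where `A` is the upper-left
block of `H`. -/
theorem stmt5 (m : ℕ)
    (A B : Matrix (Fin m) (Fin m) ℂ) (hA : A.IsHermitian) (hB : B.IsSymm)
    (H : Matrix (Fin m ⊕ Fin m) (Fin m ⊕ Fin m) ℂ)
    (hH : H = fromBlocks A B (-(B.map (starRingEnd ℂ))) (-(A.map (starRingEnd ℂ))))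
    (hpd : (Smat m * H).PosDef)
    (v : (Fin m ⊕ Fin m) → ℂ) (hv : v ≠ 0) (lam : ℂ)
    (hright : H *ᵥ v = lam • v) :
    ‖lam‖ ≤ specRad A :=
  stmt5_general m A B H hH hpd v hv lam hright
end
end

section
/- With Q_L := SQ(Q*SQ)⁻¹ as above and for any vectors u, v with u = Sv, one has ‖(I − Π(Q_L))u‖₂ = ‖(I − Π(Q))v‖₂: the left eigenvector is approximated by the dual basis exactly as well as the right eigenvector is approximated by Q. -/
/-!
The projector `Π(W) = W (WᴴW)⁻¹ Wᴴ` only sees the column space of `W`, so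
`Π(Q_L) = Π(SQ (QᴴSQ)⁻¹) = Π(SQ)`. Since `S` is unitary, `Π(SQ) = S Π(Q) Sᴴ`, hence
`(I − Π(Q_L)) S v = S (I − Π(Q)) v`, and `S` preserves the Euclidean norm.
-/

open Matrix

noncomputable section

/-- Euclidean norm of a complex vector. -/
def enorm' {a : Type*} [Fintype a] (v : a → ℂ) : ℝ :=
  Real.sqrt (∑ i, ‖v i‖ ^ 2)

section

variable {R : Type*} [CommRing R] [StarRing R] {l m k : Type*} [Fintype m] [Fintype k]
  [DecidableEq k]

def orthProj (W : Matrix m k R) : Matrix m m R := W * (Wᴴ * W)⁻¹ * Wᴴ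

theorem orthProj_mul_of_isUnit_det (W : Matrix m k R) {G : Matrix k k R} (hG : IsUnit G.det) :
    orthProj (W * G) = orthProj W := by
  have hGG : G * G⁻¹ = 1 := mul_nonsing_inv G hG
  have hGGH : Gᴴ⁻¹ * Gᴴ = 1 := by
    rw [← conjTranspose_nonsing_inv, ← conjTranspose_mul, hGG, conjTranspose_one]
  calc W * G * ((W * G)ᴴ * (W * G))⁻¹ * (W * G)ᴴ
      = W * (G * G⁻¹) * (Wᴴ * W)⁻¹ * (Gᴴ⁻¹ * Gᴴ) * Wᴴ := by
        rw [conjTranspose_mul, show Gᴴ * Wᴴ * (W * G) = Gᴴ * (Wᴴ * W) * G by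
          simp only [Matrix.mul_assoc], Matrix.mul_inv_rev, Matrix.mul_inv_rev]
        simp only [Matrix.mul_assoc]
    _ = orthProj W := by rw [hGG, hGGH, Matrix.mul_one, Matrix.mul_one]; rfl

theorem orthProj_mul_of_conjTranspose_mul_self [Fintype l] [DecidableEq m] {U : Matrix l m R}
    (hU : Uᴴ * U = 1) (W : Matrix m k R) : orthProj (U * W) = U * orthProj W * Uᴴ := by
  have hgram : (U * W)ᴴ * (U * W) = Wᴴ * W := by
    rw [conjTranspose_mul, Matrix.mul_assoc, ← Matrix.mul_assoc Uᴴ, hU, Matrix.one_mul]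
  rw [orthProj, orthProj, hgram, conjTranspose_mul]
  simp only [Matrix.mul_assoc]

theorem sub_orthProj_mulVec_of_conjTranspose_mul_self [Fintype l] [DecidableEq m]
    {U : Matrix l m R} (hU : Uᴴ * U = 1) (W : Matrix m k R) (v : m → R) :
    U *ᵥ v - orthProj (U * W) *ᵥ (U *ᵥ v) = U *ᵥ (v - orthProj W *ᵥ v) := by
  rw [orthProj_mul_of_conjTranspose_mul_self hU, mulVec_mulVec, Matrix.mul_assoc _ Uᴴ, hU,
    Matrix.mul_one, mulVec_sub, mulVec_mulVec]

end

theorem Smat_conjTranspose (m : ℕ) : (Smat m)ᴴ = Smat m := by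
  simp [Smat, fromBlocks_conjTranspose]

theorem Smat_mem_unitaryGroup (m : ℕ) : Smat m ∈ unitaryGroup (Fin m ⊕ Fin m) ℂ := by
  rw [mem_unitaryGroup_iff', star_eq_conjTranspose, Smat_conjTranspose]
  simp [Smat, fromBlocks_multiply, ← fromBlocks_one]

theorem enorm'_eq_norm_toLp {n : Type*} [Fintype n] (w : n → ℂ) :
    enorm' w = ‖(WithLp.toLp 2 w : EuclideanSpace ℂ n)‖ :=
  (EuclideanSpace.norm_eq _).symm

theorem enorm'_mulVec_of_mem_unitaryGroup {n : Type*} [Fintype n] [DecidableEq n]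
    {U : Matrix n n ℂ} (hU : U ∈ unitaryGroup n ℂ) (w : n → ℂ) :
    enorm' (U *ᵥ w) = enorm' w := by
  have hinner : (U *ᵥ w) ⬝ᵥ star (U *ᵥ w) = w ⬝ᵥ star w := by
    rw [dotProduct_comm, star_mulVec, dotProduct_mulVec, vecMul_vecMul, ← star_eq_conjTranspose,
      mem_unitaryGroup_iff'.mp hU, vecMul_one, dotProduct_comm]
  rw [enorm'_eq_norm_toLp, enorm'_eq_norm_toLp, ← sq_eq_sq₀ (norm_nonneg _) (norm_nonneg _),
    norm_sq_eq_re_inner (𝕜 := ℂ), norm_sq_eq_re_inner (𝕜 := ℂ),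
    EuclideanSpace.inner_eq_star_dotProduct, EuclideanSpace.inner_eq_star_dotProduct]
  exact congrArg _ hinner

theorem stmt13_general (m k : ℕ)
    (Q : Matrix (Fin m ⊕ Fin m) (Fin k) ℂ)
    (hinv : IsUnit (Qᴴ * Smat m * Q).det)
    (QL : Matrix (Fin m ⊕ Fin m) (Fin k) ℂ)
    (hQL : QL = Smat m * Q * (Qᴴ * Smat m * Q)⁻¹)
    (u v : (Fin m ⊕ Fin m) → ℂ) (huv : u = Smat m *ᵥ v) :
    enorm' (u - (QL * (QLᴴ * QL)⁻¹ * QLᴴ) *ᵥ u)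
      = enorm' (v - (Q * (Qᴴ * Q)⁻¹ * Qᴴ) *ᵥ v) := by
  have hS := Smat_mem_unitaryGroup m
  change enorm' (u - orthProj QL *ᵥ u) = enorm' (v - orthProj Q *ᵥ v)
  rw [hQL, orthProj_mul_of_isUnit_det _ (isUnit_nonsing_inv_det _ hinv), huv,
    sub_orthProj_mulVec_of_conjTranspose_mul_self (mem_unitaryGroup_iff'.mp hS),
    enorm'_mulVec_of_mem_unitaryGroup hS]

/-- With `Q_L := SQ(QᴴSQ)⁻¹` and `u = Sv`, the dual basis approximates the left
vector `u` exactly as well as `Q` approximates the right vector `v`: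
`‖(I − Π(Q_L))u‖₂ = ‖(I − Π(Q))v‖₂`. -/
theorem stmt13 (m k : ℕ)
    (Q : Matrix (Fin m ⊕ Fin m) (Fin k) ℂ) (hQ : Qᴴ * Q = 1)
    (hinv : IsUnit (Qᴴ * Smat m * Q).det)
    (QL : Matrix (Fin m ⊕ Fin m) (Fin k) ℂ)
    (hQL : QL = Smat m * Q * (Qᴴ * Smat m * Q)⁻¹)
    (u v : (Fin m ⊕ Fin m) → ℂ) (huv : u = Smat m *ᵥ v) :
    enorm' (u - (QL * (QLᴴ * QL)⁻¹ * QLᴴ) *ᵥ u)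
      = enorm' (v - (Q * (Qᴴ * Q)⁻¹ * Qᴴ) *ᵥ v) :=
  stmt13_general m k Q hinv QL hQL u v huv
end
end
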